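/- Let B be a real p×q matrix with p ≥ q ≥ 1 and n ≥ 1, and suppose B has full column rank (rank B = q, equivalently Bᵀ has full row rank). Then X^{p−q} divides the characteristic polynomial of C, and (X − (n−1))^{p−q} divides the characteristic polynomial of D; that is, C has 0 as an eigenvalue with algebraic multiplicity at least p − q, and D has n − 1 as an eigenvalue with algebraic multiplicity at least p − q. -/

import Mathlib

open Matrix

/-- The matrix `C` of Construction III: indexed by `Fin p ⊕ (Fin n × Fin q)`,
first block row `[0, B, …, B]`, and the `n×n` grid of `q×q` blocks has zero diagonal blocks
and identity blocks `I_q` off the diagonal. -/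
def matC3 (p q n : ℕ) (B : Matrix (Fin p) (Fin q) ℝ) :
    Matrix (Fin p ⊕ Fin n × Fin q) (Fin p ⊕ Fin n × Fin q) ℝ :=
  Matrix.of fun a b =>
    match a, b with
    | Sum.inl i, Sum.inr (_, j) => B i j
    | Sum.inr (_, j), Sum.inl i => B i j
    | Sum.inr (k, j), Sum.inr (k', j') => if k ≠ k' ∧ j = j' then 1 else 0
    | _, _ => 0

/-- The matrix `D` of Construction III: indexed by `Fin q ⊕ (Fin n × Fin p)`,
first block row `[0, Bᵀ, …, Bᵀ]`, and the `n×n` grid of `p×p` blocks has zero diagonal blocks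
and identity blocks `I_p` off the diagonal. -/
def matD3 (p q n : ℕ) (B : Matrix (Fin p) (Fin q) ℝ) :
    Matrix (Fin q ⊕ Fin n × Fin p) (Fin q ⊕ Fin n × Fin p) ℝ :=
  Matrix.of fun a b =>
    match a, b with
    | Sum.inl j, Sum.inr (_, i) => B i j
    | Sum.inr (_, i), Sum.inl j => B i j
    | Sum.inr (k, i), Sum.inr (k', i') => if k ≠ k' ∧ i = i' then 1 else 0
    | _, _ => 0

/-!
Geometric multiplicity bounds algebraic multiplicity, so it suffices to exhibit `p − q`
independent eigenvectors. For `x ∈ ker Bᵀ`, a space of dimension `p − rank B = p − q`,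
the vector `(x, 0, …, 0)` lies in `ker C`, and `(0, x, …, x)` is an eigenvector of `D` for the
eigenvalue `n − 1`, since each block row of `D` sees `n − 1` copies of `x` off its diagonal.
-/

open Polynomial Module

namespace Matrix

variable {K : Type*} [Field K]

theorem pow_finrank_dvd_charpoly_of_injective {ι V : Type*} [Fintype ι] [DecidableEq ι]
    [AddCommGroup V] [Module K V] (A : Matrix ι ι K) (μ : K) (f : V →ₗ[K] ι → K)
    (hf : Function.Injective f) (hA : ∀ v, A *ᵥ f v = μ • f v) :
    (X - C μ) ^ finrank K V ∣ A.charpoly := by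
  have hrange : LinearMap.range f ≤ Module.End.eigenspace (toLin' A) μ := by
    rintro _ ⟨v, rfl⟩
    exact Module.End.mem_eigenspace_iff.mpr (hA v)
  have hle : finrank K V ≤ A.charpoly.rootMultiplicity μ := calc
    finrank K V = finrank K (LinearMap.range f) := (LinearMap.finrank_range_of_inj hf).symm
    _ ≤ finrank K (Module.End.eigenspace (toLin' A) μ) := Submodule.finrank_mono hrange
    _ ≤ A.charpoly.rootMultiplicity μ := by
      simpa only [charpoly_toLin'] using LinearMap.finrank_eigenspace_le (toLin' A) μ
  exact (pow_dvd_pow _ hle).trans (pow_rootMultiplicity_dvd _ _)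

theorem finrank_ker_mulVecLin_transpose {m n : Type*} [Fintype m] [Fintype n]
    (B : Matrix m n K) :
    finrank K (LinearMap.ker Bᵀ.mulVecLin) = Fintype.card m - B.rank := by
  have := LinearMap.finrank_range_add_finrank_ker Bᵀ.mulVecLin
  rw [← rank, rank_transpose, finrank_fintype_fun_eq_card] at this
  omega

end Matrix

namespace LinearMap

variable (R : Type*) [Semiring R] (α β γ : Type*)

def sumElimZero : (α → R) →ₗ[R] α ⊕ β → R where
  toFun x := Sum.elim x 0
  map_add' x y := by ext (a | b) <;> simp
  map_smul' c x := by ext (a | b) <;> simp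

def zeroSumElimSnd : (β → R) →ₗ[R] α ⊕ γ × β → R where
  toFun x := Sum.elim 0 (fun z => x z.2)
  map_add' x y := by ext (a | b) <;> simp
  map_smul' c x := by ext (a | b) <;> simp

theorem sumElimZero_injective : Function.Injective (sumElimZero R α β) :=
  fun _ _ h => funext fun a => congrFun h (Sum.inl a)

theorem zeroSumElimSnd_injective [Nonempty γ] : Function.Injective (zeroSumElimSnd R α β γ) :=
  fun _ _ h => funext fun b => congrFun h (Sum.inr (Classical.arbitrary γ, b))

end LinearMap

open LinearMap in
theorem matC3_mulVec_sumElimZero (p q n : ℕ) (B : Matrix (Fin p) (Fin q) ℝ) (x : Fin p → ℝ) :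
    matC3 p q n B *ᵥ sumElimZero ℝ _ _ x = zeroSumElimSnd ℝ _ _ _ (Bᵀ *ᵥ x) := by
  ext (i | ⟨k, j⟩) <;>
    simp [matC3, sumElimZero, zeroSumElimSnd, mulVec, dotProduct, Fintype.sum_sum_type]

open LinearMap in
theorem matD3_mulVec_zeroSumElimSnd (p q n : ℕ) (B : Matrix (Fin p) (Fin q) ℝ)
    (x : Fin p → ℝ) :
    matD3 p q n B *ᵥ zeroSumElimSnd ℝ _ _ _ x =
      sumElimZero ℝ _ _ ((n : ℝ) • Bᵀ *ᵥ x) + ((n : ℝ) - 1) • zeroSumElimSnd ℝ _ _ _ x := by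
  ext (j | ⟨k, i⟩)
  · simp [matD3, sumElimZero, zeroSumElimSnd, mulVec, dotProduct, Fintype.sum_sum_type,
      Fintype.sum_prod_type]
  · have hrow : ∀ k' : Fin n, (∑ i' : Fin p, if k ≠ k' ∧ i = i' then x i' else 0) =
        x i - if k = k' then x i else 0 := fun k' => by
      by_cases h : k = k' <;> simp [h]
    simp only [matD3, sumElimZero, zeroSumElimSnd, mulVec, dotProduct, of_apply,
      Fintype.sum_sum_type, Fintype.sum_prod_type, coe_mk, AddHom.coe_mk, Sum.elim_inl,
      Sum.elim_inr, Pi.zero_apply, mul_zero, Finset.sum_const_zero, zero_add, ite_mul,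
      one_mul, zero_mul, hrow]
    simp [Finset.sum_sub_distrib, sub_one_mul]

theorem full_rank_eigenvalue_multiplicity_general (p q n : ℕ) (hn : 1 ≤ n)
    (B : Matrix (Fin p) (Fin q) ℝ) (hrank : B.rank = q) :
    Polynomial.X ^ (p - q) ∣ (matC3 p q n B).charpoly ∧
      (Polynomial.X - Polynomial.C ((n : ℝ) - 1)) ^ (p - q) ∣ (matD3 p q n B).charpoly := by
  set V := LinearMap.ker Bᵀ.mulVecLin
  have hV : finrank ℝ V = p - q := by
    rw [finrank_ker_mulVecLin_transpose, Fintype.card_fin, hrank]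
  have hBv : ∀ v : V, Bᵀ *ᵥ (v : Fin p → ℝ) = 0 := fun v => v.2
  have : Nonempty (Fin n) := ⟨⟨0, hn⟩⟩
  rw [← hV]
  constructor
  · simpa using (matC3 p q n B).pow_finrank_dvd_charpoly_of_injective 0
      (LinearMap.sumElimZero ℝ _ _ ∘ₗ V.subtype)
      ((LinearMap.sumElimZero_injective ..).comp V.injective_subtype)
      (fun v => by simp [matC3_mulVec_sumElimZero, hBv])
  · exact (matD3 p q n B).pow_finrank_dvd_charpoly_of_injective _
      (LinearMap.zeroSumElimSnd ℝ _ _ _ ∘ₗ V.subtype)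
      ((LinearMap.zeroSumElimSnd_injective ..).comp V.injective_subtype)
      (fun v => by simp [matD3_mulVec_zeroSumElimSnd, hBv])

/-- If `B` has full column rank, then `C` has `0` as an eigenvalue with algebraic multiplicity
at least `p − q`, and `D` has `n − 1` as an eigenvalue with algebraic multiplicity at least
`p − q`. -/
theorem full_rank_eigenvalue_multiplicity (p q n : ℕ) (hq : 1 ≤ q) (hpq : q ≤ p) (hn : 1 ≤ n)
    (B : Matrix (Fin p) (Fin q) ℝ) (hrank : B.rank = q) :
    Polynomial.X ^ (p - q) ∣ (matC3 p q n B).charpoly ∧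
      (Polynomial.X - Polynomial.C ((n : ℝ) - 1)) ^ (p - q) ∣ (matD3 p q n B).charpoly :=
  full_rank_eigenvalue_multiplicity_general p q n hn B hrank
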